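/- Let S be a nonempty finite set of positive integers with J = max S, let P(X) = ∑_{i∈S} (X^(J+i) + X^(J−i)) in (ZMod 2)[X], and let d_Q be the multiplicity of 1 as a root of P. If ν ≥ 0 and the quadratic trace function Q_{2^ν}(x) = Tr(∑_{i∈S} x^(2^i+1)) on GaloisField 2 (2^ν) is balanced, then 2^ν < 2·d_Q. -/

import Mathlib

/-- The quadratic trace function `Q_n(x) = Tr(∑_{i∈S} x^(2^i+1))` on `GaloisField 2 n`. -/
noncomputable def Qtr (S : Finset ℕ) (n : ℕ) (x : GaloisField 2 n) : ZMod 2 :=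
  Algebra.trace (ZMod 2) (GaloisField 2 n) (∑ i ∈ S, x ^ (2 ^ i + 1))

/-- `g` is balanced if it takes the value `1` exactly `2^(n-1)` times. -/
noncomputable def BalancedG (n : ℕ) (g : GaloisField 2 n → ZMod 2) : Prop :=
  Nat.card {x : GaloisField 2 n // g x = 1} = 2 ^ (n - 1)

open Polynomial

/-!
Let `σ` be the Frobenius `x ↦ x²` of `F = GF(2ⁿ)`, `n = 2^ν`, as an `𝔽₂`-linear map. Then
`Q(x) = ∑_{i∈S} Tr(σⁱx · x)`, and since `σ` preserves the trace form, the polar form of `Q` is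
`Tr(σᴶx · P(σ)z)`, with radical `ker P(σ)`. As `σⁿ = 1` and `n` is a power of `2`, `D = σ - 1`
satisfies `Dⁿ = 0` and has one-dimensional kernel, so `ker P(σ) = ker D^{d_Q}` is the image of
`D^{n - d_Q}`. Moving `D` across the trace form costs a factor `-σ`, so `Q` vanishes on the
image of `Dᵐ` once `D^{2m} = 0`. Hence if `2 d_Q ≤ n`, `Q` vanishes on the radical of its polar
form, and then the Walsh sum `W = ∑ (-1)^{Q(x)}` satisfies `W² = 2ⁿ · |ker P(σ)| ≠ 0`, so `Q` is
not balanced.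
-/

theorem sub_one_pow_char_pow_eq_zero {R A : Type*} [CommRing R] [Ring A] [Algebra R A]
    (p : ℕ) [Fact p.Prime] [CharP R p] {a : A} (ν : ℕ) (ha : a ^ p ^ ν = 1) :
    (a - 1) ^ p ^ ν = 0 := by
  simpa [ha] using congrArg (aeval a) (sub_pow_char_pow (X : R[X]) 1 ν)

theorem eval_zero_sum_X_pow_add_X_pow {R : Type*} [Semiring R] {S : Finset ℕ} (hS : S.Nonempty)
    (hpos : 0 < S.max' hS) :
    (∑ i ∈ S, ((X : R[X]) ^ (S.max' hS + i) + X ^ (S.max' hS - i))).eval 0 = 1 := by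
  rw [eval_finsetSum, Finset.sum_eq_single_of_mem _ (S.max'_mem hS)]
  · simp [eval_X_pow, hpos.ne']
  · intro i hi hne
    have := (S.le_max' i hi).lt_of_ne hne
    simp [eval_X_pow, zero_pow (by omega : S.max' hS + i ≠ 0),
      zero_pow (by omega : S.max' hS - i ≠ 0)]

namespace LinearMap

variable {K V : Type*} [Field K] [AddCommGroup V] [Module K V]

theorem finrank_ker_pow_le [FiniteDimensional K V] (f : Module.End K V) (k : ℕ) :
    Module.finrank K (ker (f ^ k)) ≤ k * Module.finrank K (ker f) := by
  induction k with
  | zero => simp [Module.End.one_eq_id]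
  | succ k ih =>
    have h := f.lift_rank_comap_le (ker (f ^ k))
    rw [← ker_comp, ← Module.End.mul_eq_comp, ← pow_succ] at h
    simp only [Cardinal.lift_id, ← Module.finrank_eq_rank] at h
    norm_cast at h
    rw [add_one_mul]
    omega

theorem ker_pow_le_range_pow [FiniteDimensional K V] {f : Module.End K V}
    (hf : f ^ Module.finrank K V = 0) (hker : Module.finrank K (ker f) ≤ 1) (e : ℕ) :
    ker (f ^ e) ≤ range (f ^ (Module.finrank K V - e)) := by
  set N := Module.finrank K V
  have hle : range (f ^ (N - e)) ≤ ker (f ^ e) := by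
    rintro _ ⟨y, rfl⟩
    rw [mem_ker, ← Module.End.mul_apply, ← pow_add, pow_eq_zero_of_le (by omega) hf,
      zero_apply]
  refine (Submodule.eq_of_le_of_finrank_le hle ?_).ge
  have := finrank_range_add_finrank_ker (f ^ (N - e))
  have := finrank_ker_pow_le f e
  have := finrank_ker_pow_le f (N - e)
  have := (ker (f ^ e)).finrank_le
  have := Nat.mul_le_mul_left e hker
  have := Nat.mul_le_mul_left (N - e) hker
  omega

theorem ker_aeval_eq_ker_pow_rootMultiplicity {f : Module.End K V} {a : K} {N : ℕ}
    (hN : (f - algebraMap K _ a) ^ N = 0) {P : K[X]} (hP : P ≠ 0) :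
    ker (aeval f P) = ker ((f - algebraMap K _ a) ^ P.rootMultiplicity a) := by
  obtain ⟨u, hPu, hu⟩ := P.exists_eq_pow_rootMultiplicity_mul_and_not_dvd hP a
  have hcop : IsCoprime (X - C a) u := (irreducible_X_sub_C a).coprime_iff_not_dvd.mpr hu
  have haeval (k : ℕ) : aeval f ((X - C a) ^ k) = (f - algebraMap K _ a) ^ k := by simp
  have hu_ker : ker (aeval f u) = ⊥ := by
    simpa [haeval, hN] using disjoint_ker_aeval_of_isCoprime f (hcop.pow_left (m := N))
  conv_lhs => rw [hPu, ← sup_ker_aeval_eq_ker_aeval_mul_of_coprime f hcop.pow_left, hu_ker,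
    sup_bot_eq, haeval]

end LinearMap

namespace LinearMap.BilinForm

variable {R V : Type*} [CommRing R] [AddCommGroup V] [Module R V]
  (β : LinearMap.BilinForm R V)

def powQuad (s : Module.End R V) (S : Finset ℕ) (x : V) : R :=
  ∑ i ∈ S, β ((s ^ i) x) x

variable {s : Module.End R V}

theorem apply_pow_apply_pow (hs : ∀ a b : V, β (s a) (s b) = β a b) (k : ℕ) (a b : V) :
    β ((s ^ k) a) ((s ^ k) b) = β a b := by
  induction k with
  | zero => simp
  | succ k ih => rw [pow_succ', Module.End.mul_apply, Module.End.mul_apply, hs, ih]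

theorem apply_sub_one_apply (hs : ∀ a b : V, β (s a) (s b) = β a b) (a b : V) :
    β ((s - 1) a) b = -β (s a) ((s - 1) b) := by
  simp only [LinearMap.sub_apply, Module.End.one_apply, map_sub, hs]
  abel

theorem apply_sub_one_pow_apply (hs : ∀ a b : V, β (s a) (s b) = β a b) (m : ℕ) (a b : V) :
    β (((s - 1) ^ m) a) b = (-1) ^ m * β ((s ^ m) a) (((s - 1) ^ m) b) := by
  induction m generalizing a with
  | zero => simp
  | succ m ih =>
    have hcomm : (s ^ m) ((s - 1) a) = (s - 1) ((s ^ m) a) := by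
      rw [← Module.End.mul_apply, ← Module.End.mul_apply,
        ((Commute.refl s).sub_right (Commute.one_right s)).pow_left m |>.eq]
    rw [show ((s - 1) ^ (m + 1)) a = ((s - 1) ^ m) ((s - 1) a) by
      rw [pow_succ, Module.End.mul_apply], ih, hcomm, apply_sub_one_apply β hs,
      ← Module.End.mul_apply s, ← pow_succ', ← Module.End.mul_apply (s - 1), ← pow_succ']
    ring

theorem powQuad_eq_zero_of_mem_range (hs : ∀ a b : V, β (s a) (s b) = β a b) (S : Finset ℕ)
    {m : ℕ} (hm : (s - 1) ^ (2 * m) = 0) {y : V} (hy : y ∈ range ((s - 1) ^ m)) :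
    β.powQuad s S y = 0 := by
  obtain ⟨w, rfl⟩ := hy
  refine Finset.sum_eq_zero fun i _ => ?_
  have hcomm : (s ^ i) (((s - 1) ^ m) w) = ((s - 1) ^ m) ((s ^ i) w) := by
    rw [← Module.End.mul_apply, ← Module.End.mul_apply,
      ((Commute.refl s).sub_right (Commute.one_right s)).pow_pow i m |>.eq]
  rw [hcomm, apply_sub_one_pow_apply β hs, ← Module.End.mul_apply ((s - 1) ^ m), ← pow_add,
    ← two_mul, hm, LinearMap.zero_apply, map_zero, mul_zero]

theorem powQuad_add (hβ : β.IsSymm) (hs : ∀ a b : V, β (s a) (s b) = β a b) {S : Finset ℕ}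
    {J : ℕ} (hJ : ∀ i ∈ S, i ≤ J) (x z : V) :
    β.powQuad s S (x + z) = β.powQuad s S x + β.powQuad s S z
      + β ((s ^ J) x) (aeval s (∑ i ∈ S, ((X : R[X]) ^ (J + i) + X ^ (J - i))) z) := by
  simp only [powQuad, map_sum, LinearMap.sum_apply, map_add, LinearMap.add_apply, map_pow,
    aeval_X, ← Finset.sum_add_distrib]
  refine Finset.sum_congr rfl fun i hi => ?_
  have h₁ : β ((s ^ i) x) z = β ((s ^ J) x) ((s ^ (J - i)) z) := by
    rw [← apply_pow_apply_pow β hs (J - i), ← Module.End.mul_apply, ← pow_add,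
      Nat.sub_add_cancel (hJ i hi)]
  have h₂ : β ((s ^ i) z) x = β ((s ^ J) x) ((s ^ (J + i)) z) := by
    rw [← hβ.eq, ← apply_pow_apply_pow β hs J, ← Module.End.mul_apply, ← pow_add]
  rw [h₁, h₂]
  abel

end LinearMap.BilinForm

section Walsh

def signChar : AddChar (ZMod 2) ℤ where
  toFun a := if a = 0 then 1 else -1
  map_zero_eq_one' := rfl
  map_add_eq_mul' := by decide

theorem signChar_eq_one_iff {a : ZMod 2} : signChar a = 1 ↔ a = 0 := by
  revert a
  decide

theorem sum_signChar_eq_card_sub {α : Type*} [Fintype α] (q : α → ZMod 2) :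
    ∑ x, signChar (q x) = Fintype.card α - 2 * Fintype.card {x // q x = 1} := by
  classical
  have h (a : ZMod 2) : signChar a = 1 - 2 * if a = 1 then 1 else 0 := by
    revert a
    decide
  simp only [h, Finset.sum_sub_distrib, ← Finset.mul_sum, Finset.sum_boole, Finset.sum_const,
    Finset.card_univ, nsmul_eq_mul, mul_one, Fintype.card_subtype]

variable {V : Type*} [AddCommGroup V] [Module (ZMod 2) V]

theorem sum_signChar_bilinForm [Fintype V] (B : LinearMap.BilinForm (ZMod 2) V) (z : V)
    [Decidable (B.flip z = 0)] :
    ∑ x, signChar (B x z) = if B.flip z = 0 then (Fintype.card V : ℤ) else 0 := by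
  have hiff : signChar.compAddMonoidHom (B.flip z).toAddMonoidHom = 0 ↔ B.flip z = 0 := by
    simp only [AddChar.eq_zero_iff, AddChar.compAddMonoidHom_apply, signChar_eq_one_iff,
      LinearMap.ext_iff, LinearMap.zero_apply]
    rfl
  convert (signChar.compAddMonoidHom (B.flip z).toAddMonoidHom).sum_eq_ite using 2
  · rfl
  · exact hiff.symm

theorem sum_signChar_sq [Fintype V] (q : V → ZMod 2)
    (B : LinearMap.BilinForm (ZMod 2) V) (hq : ∀ x z, q (x + z) = q x + q z + B x z) :
    (∑ x, signChar (q x)) ^ 2 =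
      Fintype.card V * ∑ z ∈ Finset.univ.filter (fun z => B.flip z = 0), signChar (q z) := by
  have hterm (x z : V) :
      signChar (q x) * signChar (q (x + z)) = signChar (q z) * signChar (B x z) := by
    rw [← AddChar.map_add_eq_mul, ← AddChar.map_add_eq_mul, hq, ← add_assoc, ← add_assoc,
      CharTwo.add_self_eq_zero, zero_add]
  calc (∑ x, signChar (q x)) ^ 2 = ∑ x, ∑ z, signChar (q x) * signChar (q (x + z)) := by
        rw [sq, Finset.sum_mul_sum]
        refine Finset.sum_congr rfl fun x _ => ?_
        exact (Fintype.sum_equiv (Equiv.addLeft x) (fun z => signChar (q x) * signChar (q (x + z)))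
          (fun y => signChar (q x) * signChar (q y)) fun z => rfl).symm
    _ = ∑ z, signChar (q z) * ∑ x, signChar (B x z) := by
        simp only [hterm, Finset.mul_sum]
        exact Finset.sum_comm
    _ = _ := by
        simp only [sum_signChar_bilinForm, mul_ite, mul_zero, Finset.sum_ite,
          Finset.sum_const_zero, add_zero, ← Finset.sum_mul]
        ring

theorem two_mul_card_eq_one_ne_card [Finite V] (q : V → ZMod 2)
    (B : LinearMap.BilinForm (ZMod 2) V) (hq : ∀ x z, q (x + z) = q x + q z + B x z)
    (hrad : ∀ z, B.flip z = 0 → q z = 0) :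
    2 * Nat.card {x // q x = 1} ≠ Nat.card V := by
  classical
  have := Fintype.ofFinite V
  intro h
  rw [Nat.card_eq_fintype_card, Nat.card_eq_fintype_card] at h
  have hW : ∑ x, signChar (q x) = 0 := by
    rw [sum_signChar_eq_card_sub, ← h]
    push_cast
    ring
  have hsq := sum_signChar_sq q B hq
  rw [hW, Finset.sum_congr rfl fun z hz => by rw [hrad z (Finset.mem_filter.mp hz).2]] at hsq
  simp only [AddChar.map_zero_eq_one, Finset.sum_const, nsmul_eq_mul, mul_one] at hsq
  have hV : (0 : ℤ) < Fintype.card V := by exact_mod_cast Fintype.card_pos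
  have hrad_card : (0 : ℤ) < (Finset.univ.filter fun z : V => B.flip z = 0).card := by
    exact_mod_cast Finset.card_pos.mpr ⟨0, by simp⟩
  nlinarith

end Walsh

section Frobenius

variable {n : ℕ}

noncomputable def frob (n : ℕ) : Module.End (ZMod 2) (GaloisField 2 n) :=
  (FiniteField.frobeniusAlgEquivOfAlgebraic (ZMod 2) (GaloisField 2 n)).toLinearMap

theorem frob_pow_eq_toLinearMap (k : ℕ) :
    frob n ^ k =
      (FiniteField.frobeniusAlgEquivOfAlgebraic (ZMod 2) (GaloisField 2 n) ^ k).toLinearMap :=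
  (AlgEquiv.pow_toLinearMap _ k).symm

theorem frob_pow_apply (k : ℕ) (x : GaloisField 2 n) : (frob n ^ k) x = x ^ 2 ^ k := by
  rw [frob_pow_eq_toLinearMap, AlgEquiv.toLinearMap_apply, AlgEquiv.coe_pow,
    FiniteField.coe_frobeniusAlgEquivOfAlgebraic_iterate, ZMod.card]

theorem frob_pow_surjective (k : ℕ) : Function.Surjective (frob n ^ k) := by
  rw [frob_pow_eq_toLinearMap]
  exact AlgEquiv.surjective _

theorem eq_zero_of_forall_traceForm_frob_pow_eq_zero {k : ℕ} {c : GaloisField 2 n}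
    (h : ∀ x, Algebra.traceForm (ZMod 2) _ ((frob n ^ k) x) c = 0) : c = 0 := by
  refine (traceForm_nondegenerate (ZMod 2) _).1 c fun y => ?_
  obtain ⟨x, rfl⟩ := frob_pow_surjective k y
  rw [(Algebra.traceForm_isSymm _).eq]
  exact h x

theorem frob_pow_self (hn : n ≠ 0) : frob n ^ n = 1 := by
  have h :=
    pow_orderOf_eq_one (FiniteField.frobeniusAlgEquivOfAlgebraic (ZMod 2) (GaloisField 2 n))
  rw [FiniteField.orderOf_frobeniusAlgEquivOfAlgebraic, GaloisField.finrank 2 hn] at h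
  rw [frob_pow_eq_toLinearMap, h]
  rfl

theorem traceForm_frob_frob (a b : GaloisField 2 n) :
    Algebra.traceForm (ZMod 2) _ (frob n a) (frob n b) = Algebra.traceForm (ZMod 2) _ a b := by
  simp only [Algebra.traceForm_apply, frob, AlgEquiv.toLinearMap_apply, ← map_mul,
    Algebra.trace_eq_of_algEquiv]

theorem finrank_ker_frob_sub_one_le :
    Module.finrank (ZMod 2) (LinearMap.ker (frob n - 1)) ≤ 1 := by
  refine (Submodule.finrank_mono fun x hx => ?_).trans
    (finrank_span_le_card {(1 : GaloisField 2 n)})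
  rw [LinearMap.mem_ker, LinearMap.sub_apply, Module.End.one_apply, sub_eq_zero,
    ← pow_one (frob n), frob_pow_apply, pow_one] at hx
  rcases (mul_eq_zero.mp (show x * (x - 1) = 0 by rw [mul_sub, mul_one, ← sq, hx, sub_self]))
    with h | h
  · simp [h]
  · simp [sub_eq_zero.mp h, Submodule.mem_span_singleton_self]

theorem Qtr_eq_powQuad (S : Finset ℕ) :
    Qtr S n = (Algebra.traceForm (ZMod 2) (GaloisField 2 n)).powQuad (frob n) S := by
  ext x
  simp only [Qtr, LinearMap.BilinForm.powQuad, map_sum, Algebra.traceForm_apply, frob_pow_apply,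
    pow_succ]

theorem Qtr_eq_zero_of_aeval_frob_eq_zero (S : Finset ℕ) (ν : ℕ) {P : (ZMod 2)[X]} (hP : P ≠ 0)
    (hd : 2 * P.rootMultiplicity 1 ≤ 2 ^ ν) {z : GaloisField 2 (2 ^ ν)}
    (hz : aeval (frob (2 ^ ν)) P z = 0) :
    Qtr S (2 ^ ν) z = 0 := by
  have hn : 2 ^ ν ≠ 0 := by positivity
  have hnil : (frob (2 ^ ν) - 1) ^ 2 ^ ν = 0 :=
    sub_one_pow_char_pow_eq_zero (R := ZMod 2) 2 ν (frob_pow_self hn)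
  have hker := LinearMap.ker_aeval_eq_ker_pow_rootMultiplicity (a := 1) (by rwa [map_one]) hP
  rw [map_one] at hker
  rw [← LinearMap.mem_ker, hker] at hz
  have hfin := GaloisField.finrank 2 hn
  have hy := LinearMap.ker_pow_le_range_pow (f := frob (2 ^ ν) - 1) (by rw [hfin]; exact hnil)
    finrank_ker_frob_sub_one_le _ hz
  rw [Qtr_eq_powQuad]
  exact LinearMap.BilinForm.powQuad_eq_zero_of_mem_range _ traceForm_frob_frob S
    (pow_eq_zero_of_le (by omega) hnil) hy

end Frobenius

/-- If `Q_{2^ν}` is balanced then `2^ν < 2·d_Q`, where `d_Q` is the multiplicity of the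
root `1` in `P(X) = ∑_{i∈S}(X^(J+i) + X^(J-i))`. -/
theorem balanced_pow_two_lt (S : Finset ℕ) (hS : S.Nonempty)
    (hpos : ∀ i ∈ S, 1 ≤ i) (J : ℕ) (hJ : J = S.max' hS)
    (P : (ZMod 2)[X])
    (hP : P = ∑ i ∈ S, ((X : (ZMod 2)[X]) ^ (J + i) + (X : (ZMod 2)[X]) ^ (J - i)))
    (dQ : ℕ) (hd : dQ = P.rootMultiplicity 1)
    (ν : ℕ) (hbal : BalancedG (2 ^ ν) (Qtr S (2 ^ ν))) :
    2 ^ ν < 2 * dQ := by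
  subst hJ hd
  by_contra! hle
  have hP0 : P ≠ 0 := by
    have := eval_zero_sum_X_pow_add_X_pow (R := ZMod 2) hS (hpos _ (S.max'_mem hS))
    rintro rfl
    simp [← hP] at this
  set s := frob (2 ^ ν)
  refine two_mul_card_eq_one_ne_card (Qtr S (2 ^ ν))
    ((Algebra.traceForm (ZMod 2) _).compl₁₂ (s ^ S.max' hS) (aeval s P)) (fun x z => ?_)
    (fun z hz => ?_) ?_
  · rw [Qtr_eq_powQuad, hP]
    exact LinearMap.BilinForm.powQuad_add _ (Algebra.traceForm_isSymm _) traceForm_frob_frob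
      (fun i hi => S.le_max' i hi) x z
  · exact Qtr_eq_zero_of_aeval_frob_eq_zero S ν hP0 hle
      (eq_zero_of_forall_traceForm_frob_pow_eq_zero (LinearMap.congr_fun hz))
  · rw [hbal, GaloisField.card 2 _ (by positivity), ← pow_succ',
      Nat.sub_add_cancel Nat.one_le_two_pow]
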